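/- Let T = {(t,t,t) : t ∈ [0,1]}, R = {(r, ((−1+√3)/2)r, ((−1−√3)/2)r) : r ∈ [0,1]}, S = {(s, ((−1−√3)/2)s, ((−1+√3)/2)s) : s ∈ [0,1]} be three mutually orthogonal segments in ℝ³, and let μ_T, μ_R, μ_S be the uniform (normalized one-dimensional Hausdorff) probability measures on them. Then for every coupling γ ∈ P((ℝ³)³) with marginals μ_T, μ_R, μ_S (necessarily concentrated on T × R × S), the multi-marginal cost ∫ Σ_{α,β=1}^3 (1/9)|x_α − x_β|² dγ takes the same value; consequently every such coupling is optimal for the multi-marginal problem, and the pushforward of the product measure μ_T ⊗ μ_R ⊗ μ_S under (x₁,x₂,x₃) ↦ (x₁+x₂+x₃)/3 is absolutely continuous with respect to Lebesgue measure on ℝ³. -/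

import Mathlib

open scoped NNReal ENNReal Topology

open MeasureTheory

namespace Ex

/-- Euclidean `ℝ³`. -/
abbrev E3 := EuclideanSpace ℝ (Fin 3)

noncomputable def vec3 (a b c : ℝ) : E3 := (WithLp.equiv 2 (Fin 3 → ℝ)).symm ![a, b, c]

/-- The segment `T = {(t,t,t) : t ∈ [0,1]}`. -/
noncomputable def segT : Set E3 := (fun t : ℝ => vec3 t t t) '' Set.Icc 0 1

/-- The segment `R = {(r, ((−1+√3)/2) r, ((−1−√3)/2) r) : r ∈ [0,1]}`. -/
noncomputable def segR : Set E3 :=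
  (fun t : ℝ => vec3 t (((-1 + Real.sqrt 3) / 2) * t) (((-1 - Real.sqrt 3) / 2) * t)) ''
    Set.Icc 0 1

/-- The segment `S = {(s, ((−1−√3)/2) s, ((−1+√3)/2) s) : s ∈ [0,1]}`. -/
noncomputable def segS : Set E3 :=
  (fun t : ℝ => vec3 t (((-1 - Real.sqrt 3) / 2) * t) (((-1 + Real.sqrt 3) / 2) * t)) ''
    Set.Icc 0 1

/-- The uniform (normalized one-dimensional Hausdorff) measure on a set `A ⊆ ℝ³`. -/
noncomputable def unifOn (A : Set E3) : Measure E3 :=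
  ((Measure.hausdorffMeasure 1 : Measure E3) A)⁻¹ •
    (Measure.hausdorffMeasure 1 : Measure E3).restrict A

/-- `γ` is a coupling of the uniform measures on `T`, `R`, `S`. -/
def IsCoupling (γ : Measure (E3 × E3 × E3)) : Prop :=
  γ.map Prod.fst = unifOn segT ∧
    γ.map (fun p => p.2.1) = unifOn segR ∧ γ.map (fun p => p.2.2) = unifOn segS

/-- The multi-marginal Gangbo–Święch cost `Σ_{α,β=1}^3 (1/9)|x_α − x_β|²`. -/
noncomputable def mmCost (p : E3 × E3 × E3) : ℝ≥0∞ :=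
  (1 / 9 : ℝ≥0∞) *
    (edist p.1 p.2.1 ^ 2 + edist p.1 p.2.2 ^ 2 + edist p.2.1 p.1 ^ 2 +
      edist p.2.1 p.2.2 ^ 2 + edist p.2.2 p.1 ^ 2 + edist p.2.2 p.2.1 ^ 2)

end Ex

open scoped RealInnerProductSpace

namespace Ex

lemma smul_vec3 (t a b c : ℝ) : t • vec3 a b c = vec3 (t*a) (t*b) (t*c) := by
  unfold vec3
  rw [WithLp.equiv_symm_apply, ← WithLp.toLp_smul]
  congr 1
  funext i
  fin_cases i <;> simp [smul_eq_mul]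

lemma inner_vec3 (a b c d e f : ℝ) : ⟪vec3 a b c, vec3 d e f⟫ = a*d + b*e + c*f := by
  simp [vec3, PiLp.inner_apply, Fin.sum_univ_three]; ring

lemma unifOn_image (v : E3) (hv : v ≠ 0) :
    unifOn ((fun t : ℝ => t • v) '' Set.Icc 0 1) =
      Measure.map (fun t : ℝ => t • v) (volume.restrict (Set.Icc 0 1)) := by
  set f : ℝ → E3 := fun t => t • v with hfdef
  have hf : Measurable f := (continuous_id.smul continuous_const).measurable
  have himg : ∀ s : Set ℝ,
      (Measure.hausdorffMeasure 1 : Measure E3) (f '' s) = ‖v‖₊ * volume s := by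
    intro s
    rw [hfdef, MeasureTheory.hausdorffMeasure_smul_right_image,
      MeasureTheory.hausdorffMeasure_real]
    simp [ENNReal.smul_def]
  have hA : (Measure.hausdorffMeasure 1 : Measure E3) (f '' Set.Icc 0 1) = ‖v‖₊ := by
    rw [himg]; simp [Real.volume_Icc]
  have h0 : (‖v‖₊ : ℝ≥0∞) ≠ 0 := by simpa using hv
  ext s hs
  rw [unifOn, Measure.smul_apply, smul_eq_mul, Measure.restrict_apply hs, hA,
    Measure.map_apply hf hs, Measure.restrict_apply (hf hs),
    Set.inter_comm s, ← Set.image_inter_preimage, Set.inter_comm, himg, ← mul_assoc,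
    ENNReal.inv_mul_cancel h0 ENNReal.coe_ne_top, one_mul]

noncomputable def vT : E3 := vec3 1 1 1
noncomputable def vR : E3 := vec3 1 ((-1 + Real.sqrt 3) / 2) ((-1 - Real.sqrt 3) / 2)
noncomputable def vS : E3 := vec3 1 ((-1 - Real.sqrt 3) / 2) ((-1 + Real.sqrt 3) / 2)

lemma vec3_ne_zero (a b c : ℝ) (ha : a ≠ 0) : vec3 a b c ≠ 0 := by
  intro h
  apply ha
  have := congrArg (fun x : E3 => (WithLp.equiv 2 (Fin 3 → ℝ)) x 0) h
  simpa [vec3] using this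

lemma vT_ne : vT ≠ 0 := vec3_ne_zero _ _ _ one_ne_zero
lemma vR_ne : vR ≠ 0 := vec3_ne_zero _ _ _ one_ne_zero
lemma vS_ne : vS ≠ 0 := vec3_ne_zero _ _ _ one_ne_zero

lemma segT_eq : segT = (fun t : ℝ => t • vT) '' Set.Icc 0 1 := by
  unfold segT vT
  rw [show (fun t : ℝ => vec3 t t t) = (fun t : ℝ => t • vec3 1 1 1) from
    funext fun t => by rw [smul_vec3, mul_one]]

lemma segR_eq : segR = (fun t : ℝ => t • vR) '' Set.Icc 0 1 := by
  unfold segR vR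
  rw [show (fun t : ℝ => vec3 t (((-1 + Real.sqrt 3) / 2) * t) (((-1 - Real.sqrt 3) / 2) * t))
      = (fun t : ℝ => t • vec3 1 ((-1 + Real.sqrt 3) / 2) ((-1 - Real.sqrt 3) / 2)) from
    funext fun t => by rw [smul_vec3, mul_one, mul_comm t, mul_comm t]]

lemma segS_eq : segS = (fun t : ℝ => t • vS) '' Set.Icc 0 1 := by
  unfold segS vS
  rw [show (fun t : ℝ => vec3 t (((-1 - Real.sqrt 3) / 2) * t) (((-1 + Real.sqrt 3) / 2) * t))
      = (fun t : ℝ => t • vec3 1 ((-1 - Real.sqrt 3) / 2) ((-1 + Real.sqrt 3) / 2)) from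
    funext fun t => by rw [smul_vec3, mul_one, mul_comm t, mul_comm t]]

lemma unifOn_segT : unifOn segT = Measure.map (fun t : ℝ => t • vT)
    (volume.restrict (Set.Icc 0 1)) := by rw [segT_eq]; exact unifOn_image _ vT_ne
lemma unifOn_segR : unifOn segR = Measure.map (fun t : ℝ => t • vR)
    (volume.restrict (Set.Icc 0 1)) := by rw [segR_eq]; exact unifOn_image _ vR_ne
lemma unifOn_segS : unifOn segS = Measure.map (fun t : ℝ => t • vS)
    (volume.restrict (Set.Icc 0 1)) := by rw [segS_eq]; exact unifOn_image _ vS_ne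

lemma sq_sqrt3 : Real.sqrt 3 ^ 2 = 3 := Real.sq_sqrt (by norm_num)

lemma ortho_TR : ∀ x ∈ segT, ∀ y ∈ segR, ⟪x, y⟫ = 0 := by
  rintro x ⟨t, ht, rfl⟩ y ⟨r, hr, rfl⟩
  rw [inner_vec3]; ring

lemma ortho_TS : ∀ x ∈ segT, ∀ y ∈ segS, ⟪x, y⟫ = 0 := by
  rintro x ⟨t, ht, rfl⟩ y ⟨r, hr, rfl⟩
  rw [inner_vec3]; ring

lemma ortho_RS : ∀ x ∈ segR, ∀ y ∈ segS, ⟪x, y⟫ = 0 := by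
  rintro x ⟨t, ht, rfl⟩ y ⟨r, hr, rfl⟩
  rw [inner_vec3]
  linear_combination (-(t*r)/2) * sq_sqrt3

noncomputable def sqE (x : E3) : ℝ≥0∞ := ENNReal.ofReal (‖x‖^2)

lemma msqE : Measurable sqE :=
  ENNReal.measurable_ofReal.comp (continuous_norm.pow 2).measurable

lemma edist_sq_of_inner (x y : E3) (h : ⟪x, y⟫ = 0) :
    edist x y ^ 2 = sqE x + sqE y := by
  rw [edist_dist, dist_eq_norm, ← ENNReal.ofReal_pow (norm_nonneg _)]
  have hn : ‖x - y‖ ^ 2 = ‖x‖ ^ 2 + ‖y‖ ^ 2 := by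
    have := norm_sub_sq_real x y
    rw [this, h]; ring
  rw [hn, sqE, sqE, ENNReal.ofReal_add (sq_nonneg _) (sq_nonneg _)]

lemma mmCost_eq {p : E3 × E3 × E3} (h1 : ⟪p.1, p.2.1⟫ = 0) (h2 : ⟪p.1, p.2.2⟫ = 0)
    (h3 : ⟪p.2.1, p.2.2⟫ = 0) :
    mmCost p = (4/9 : ℝ≥0∞) * (sqE p.1 + sqE p.2.1 + sqE p.2.2) := by
  have h1' : ⟪p.2.1, p.1⟫ = 0 := by rw [real_inner_comm]; exact h1
  have h2' : ⟪p.2.2, p.1⟫ = 0 := by rw [real_inner_comm]; exact h2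
  have h3' : ⟪p.2.2, p.2.1⟫ = 0 := by rw [real_inner_comm]; exact h3
  rw [mmCost, edist_sq_of_inner _ _ h1, edist_sq_of_inner _ _ h2,
    edist_sq_of_inner _ _ h1', edist_sq_of_inner _ _ h3, edist_sq_of_inner _ _ h2',
    edist_sq_of_inner _ _ h3']
  rw [div_eq_mul_inv, div_eq_mul_inv]
  ring

lemma meas_segT : MeasurableSet segT := by
  rw [segT_eq]
  exact ((isCompact_Icc.image (continuous_id.smul continuous_const)).isClosed).measurableSet

lemma meas_segR : MeasurableSet segR := by
  rw [segR_eq]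
  exact ((isCompact_Icc.image (continuous_id.smul continuous_const)).isClosed).measurableSet

lemma meas_segS : MeasurableSet segS := by
  rw [segS_eq]
  exact ((isCompact_Icc.image (continuous_id.smul continuous_const)).isClosed).measurableSet

lemma unifOn_compl_zero {A : Set E3} (hA : MeasurableSet A) : unifOn A Aᶜ = 0 := by
  rw [unifOn, Measure.smul_apply, Measure.restrict_apply hA.compl]
  simp

noncomputable def bLin : (ℝ × ℝ × ℝ) →ₗ[ℝ] E3 where
  toFun p := (3:ℝ)⁻¹ • (p.1 • vT + p.2.1 • vR + p.2.2 • vS)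
  map_add' p q := by
    simp only [Prod.fst_add, Prod.snd_add]
    module
  map_smul' c p := by
    simp only [Prod.smul_fst, Prod.smul_snd, RingHom.id_apply, smul_eq_mul]
    module

noncomputable def bInv (x : E3) : ℝ × ℝ × ℝ :=
  (x 0 + x 1 + x 2,
   (2 * x 0 - x 1 - x 2) / 2 + (Real.sqrt 3 / 2) * (x 1 - x 2),
   (2 * x 0 - x 1 - x 2) / 2 - (Real.sqrt 3 / 2) * (x 1 - x 2))

lemma bLin_apply (p : ℝ × ℝ × ℝ) (i : Fin 3) :
    bLin p i = (3:ℝ)⁻¹ * (p.1 * vT i + p.2.1 * vR i + p.2.2 * vS i) := by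
  simp only [bLin, LinearMap.coe_mk, AddHom.coe_mk, PiLp.smul_apply, PiLp.add_apply,
    smul_eq_mul, mul_add]

lemma vT0 : vT 0 = 1 := rfl
lemma vT1 : vT 1 = 1 := rfl
lemma vT2 : vT 2 = 1 := rfl
lemma vR0 : vR 0 = 1 := rfl
lemma vR1 : vR 1 = (-1 + Real.sqrt 3) / 2 := rfl
lemma vR2 : vR 2 = (-1 - Real.sqrt 3) / 2 := rfl
lemma vS0 : vS 0 = 1 := rfl
lemma vS1 : vS 1 = (-1 - Real.sqrt 3) / 2 := rfl
lemma vS2 : vS 2 = (-1 + Real.sqrt 3) / 2 := rfl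

lemma bLeft : Function.LeftInverse bInv bLin := by
  rintro ⟨t, r, s⟩
  refine Prod.ext ?_ (Prod.ext ?_ ?_) <;>
    simp only [bInv, bLin_apply, vT0, vT1, vT2, vR0, vR1, vR2, vS0, vS1, vS2]
  · ring
  · linear_combination ((r - s)/6) * sq_sqrt3
  · linear_combination (-(r - s)/6) * sq_sqrt3

lemma bRight : Function.RightInverse bInv bLin := by
  intro x
  have h0 : bLin (bInv x) 0 = x 0 := by
    simp only [bLin_apply, bInv, vT0, vR0, vS0]; ring
  have h1 : bLin (bInv x) 1 = x 1 := by
    simp only [bLin_apply, bInv, vT1, vR1, vS1]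
    linear_combination ((x 1 - x 2)/6) * sq_sqrt3
  have h2 : bLin (bInv x) 2 = x 2 := by
    simp only [bLin_apply, bInv, vT2, vR2, vS2]
    linear_combination (-(x 1 - x 2)/6) * sq_sqrt3
  ext i
  fin_cases i
  exacts [h0, h1, h2]

noncomputable def bEquiv : (ℝ × ℝ × ℝ) ≃ₗ[ℝ] E3 :=
  { bLin with invFun := bInv, left_inv := bLeft, right_inv := bRight }

noncomputable def bCLE : (ℝ × ℝ × ℝ) ≃L[ℝ] E3 := bEquiv.toContinuousLinearEquiv

lemma lintegral_cost (γ : Measure (E3 × E3 × E3)) (h : IsCoupling γ) :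
    ∫⁻ p, mmCost p ∂γ = (4/9 : ℝ≥0∞) *
      ((∫⁻ x, sqE x ∂unifOn segT) + (∫⁻ x, sqE x ∂unifOn segR) +
        (∫⁻ x, sqE x ∂unifOn segS)) := by
  obtain ⟨hT, hR, hS⟩ := h
  have m1 : Measurable fun p : E3 × E3 × E3 => p.1 := measurable_fst
  have m2 : Measurable fun p : E3 × E3 × E3 => p.2.1 := measurable_fst.comp measurable_snd
  have m3 : Measurable fun p : E3 × E3 × E3 => p.2.2 := measurable_snd.comp measurable_snd
  have a1 : ∀ᵐ p : E3 × E3 × E3 ∂γ, p.1 ∈ segT := by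
    rw [ae_iff]
    have : {p : E3 × E3 × E3 | ¬ p.1 ∈ segT} = (fun p : E3 × E3 × E3 => p.1) ⁻¹' segTᶜ := rfl
    rw [this, ← Measure.map_apply m1 meas_segT.compl, hT, unifOn_compl_zero meas_segT]
  have a2 : ∀ᵐ p : E3 × E3 × E3 ∂γ, p.2.1 ∈ segR := by
    rw [ae_iff]
    have : {p : E3 × E3 × E3 | ¬ p.2.1 ∈ segR} = (fun p : E3 × E3 × E3 => p.2.1) ⁻¹' segRᶜ := rfl
    rw [this, ← Measure.map_apply m2 meas_segR.compl, hR, unifOn_compl_zero meas_segR]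
  have a3 : ∀ᵐ p : E3 × E3 × E3 ∂γ, p.2.2 ∈ segS := by
    rw [ae_iff]
    have : {p : E3 × E3 × E3 | ¬ p.2.2 ∈ segS} = (fun p : E3 × E3 × E3 => p.2.2) ⁻¹' segSᶜ := rfl
    rw [this, ← Measure.map_apply m3 meas_segS.compl, hS, unifOn_compl_zero meas_segS]
  have key : ∫⁻ p, mmCost p ∂γ =
      ∫⁻ p, (4/9 : ℝ≥0∞) * (sqE p.1 + sqE p.2.1 + sqE p.2.2) ∂γ := by
    refine lintegral_congr_ae ?_
    filter_upwards [a1, a2, a3] with p hp1 hp2 hp3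
    exact mmCost_eq (ortho_TR _ hp1 _ hp2) (ortho_TS _ hp1 _ hp3) (ortho_RS _ hp2 _ hp3)
  have hq1 : Measurable fun p : E3 × E3 × E3 => sqE p.1 := msqE.comp m1
  have hq2 : Measurable fun p : E3 × E3 × E3 => sqE p.2.1 := msqE.comp m2
  have hq3 : Measurable fun p : E3 × E3 × E3 => sqE p.2.2 := msqE.comp m3
  rw [key, lintegral_const_mul (f := fun p : E3 × E3 × E3 => sqE p.1 + sqE p.2.1 + sqE p.2.2) _ ((hq1.add hq2).add hq3),
    lintegral_add_right _ hq3, lintegral_add_right _ hq2,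
    ← lintegral_map msqE m1, ← lintegral_map msqE m2, ← lintegral_map msqE m3, hT, hR, hS]

end Ex

open Ex

/-- **Example 3.8 (`ex: high dim barycenter`).** For the uniform measures on the three
mutually orthogonal segments `T`, `R`, `S` in `ℝ³`: every coupling of the three measures
has the same multi-marginal cost (hence every coupling is optimal for the multi-marginal
problem), and the pushforward of the product measure under the barycenter map
`(x₁,x₂,x₃) ↦ (x₁+x₂+x₃)/3` is absolutely continuous with respect to Lebesgue measure
on `ℝ³`. -/
theorem orthogonal_segments_all_couplings_optimal :
    (∃ c : ℝ≥0∞, ∀ γ : Measure (E3 × E3 × E3), IsCoupling γ → ∫⁻ p, mmCost p ∂γ = c) ∧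
    (∀ γ γ' : Measure (E3 × E3 × E3), IsCoupling γ → IsCoupling γ' →
      ∫⁻ p, mmCost p ∂γ ≤ ∫⁻ p, mmCost p ∂γ') ∧
    (((unifOn segT).prod ((unifOn segR).prod (unifOn segS))).map
        (fun p : E3 × E3 × E3 => (3 : ℝ)⁻¹ • (p.1 + p.2.1 + p.2.2)) ≪
      (volume : Measure E3)) := by
  set cst : ℝ≥0∞ := (4/9 : ℝ≥0∞) *
      ((∫⁻ x, sqE x ∂unifOn segT) + (∫⁻ x, sqE x ∂unifOn segR) +
        (∫⁻ x, sqE x ∂unifOn segS)) with hcst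
  refine ⟨⟨cst, fun γ hγ => lintegral_cost γ hγ⟩, fun γ γ' hγ hγ' => by
    rw [lintegral_cost γ hγ, lintegral_cost γ' hγ'], ?_⟩
  rw [unifOn_segT, unifOn_segR, unifOn_segS]
  set ν := volume.restrict (Set.Icc (0:ℝ) 1) with hν
  haveI : IsFiniteMeasure ν := ⟨by rw [hν, Measure.restrict_apply_univ, Real.volume_Icc]; norm_num⟩
  have hfT : Measurable fun t : ℝ => t • vT := (continuous_id.smul continuous_const).measurable
  have hfR : Measurable fun t : ℝ => t • vR := (continuous_id.smul continuous_const).measurable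
  have hfS : Measurable fun t : ℝ => t • vS := (continuous_id.smul continuous_const).measurable
  have hbary : Measurable fun p : E3 × E3 × E3 => (3 : ℝ)⁻¹ • (p.1 + p.2.1 + p.2.2) :=
    (show Continuous fun p : E3 × E3 × E3 => (3 : ℝ)⁻¹ • (p.1 + p.2.1 + p.2.2) by fun_prop).measurable
  rw [Measure.map_prod_map _ _ hfR hfS, Measure.map_prod_map _ _ hfT (hfR.prodMap hfS),
    Measure.map_map hbary (hfT.prodMap (hfR.prodMap hfS))]
  have hcomp : ((fun p : E3 × E3 × E3 => (3 : ℝ)⁻¹ • (p.1 + p.2.1 + p.2.2)) ∘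
      Prod.map (fun t : ℝ => t • vT) (Prod.map (fun t : ℝ => t • vR) (fun t : ℝ => t • vS))) =
      ⇑bCLE := rfl
  rw [hcomp]
  set P : Measure (ℝ × ℝ × ℝ) :=
    (volume : Measure ℝ).prod ((volume : Measure ℝ).prod (volume : Measure ℝ)) with hP
  have h1 : (ν.prod (ν.prod ν)) ≪ P :=
    (Measure.absolutelyContinuous_of_le Measure.restrict_le_self).prod
      ((Measure.absolutelyContinuous_of_le Measure.restrict_le_self).prod
        (Measure.absolutelyContinuous_of_le Measure.restrict_le_self))
  have h2 : (ν.prod (ν.prod ν)).map ⇑bCLE ≪ P.map ⇑bCLE :=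
    h1.map bCLE.continuous.measurable
  refine h2.trans ?_
  haveI : P.IsAddHaarMeasure := by
    rw [hP]
    haveI : ((volume : Measure ℝ).prod (volume : Measure ℝ)).IsAddHaarMeasure :=
      Measure.prod.instIsAddHaarMeasure _ _
    exact Measure.prod.instIsAddHaarMeasure _ _
  haveI : (P.map ⇑bCLE).IsAddHaarMeasure := bCLE.isAddHaarMeasure_map P
  have h3 := Measure.isAddLeftInvariant_eq_smul (P.map ⇑bCLE) (volume : Measure E3)
  rw [h3]
  exact Measure.AbsolutelyContinuous.smul_left .rfl _
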